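/- (Consequence of Proposition 1 via Jensen and λ-optimization.) E[ΔL̂(W, Z̃, R, S)] ≤ sqrt( 2(b−a)² · I(W; S | Z̃, R) / M ), where I(W;S|Z̃,R) is the conditional mutual information between the base-learner output W and the selection vector S given the supersample Z̃ and the task selector R. -/

import Mathlib

/-!
Under `nuP` the selection vector is uniform and independent of everything else, so each
coordinate of the gap is a symmetric sign times a difference of losses in `[a, b]`; by
`cosh x ≤ exp (x² / 2)` the gap is sub-Gaussian with variance proxy `(b - a)² / M`. The
Donsker–Varadhan inequality moves this bound to the joint law `muJ` at the price of the
information `∫ idens ∂muJ = I(W; S | Z̃, R)`, so `λ E[ΔL̂] ≤ I + λ² (b - a)² / (2M)` for every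
`λ`, and optimizing over `λ` gives the square root.
-/

open MeasureTheory ProbabilityTheory Real InformationTheory Finset

lemma Measurable.apply_of_countable {α ι β : Type*} [MeasurableSpace α] [MeasurableSpace ι]
    [Countable ι] [MeasurableSingletonClass ι] [MeasurableSpace β]
    {f : α → ι → β} {g : α → ι} (hf : Measurable f) (hg : Measurable g) :
    Measurable fun x ↦ f x (g x) :=
  (measurable_from_prod_countable_left (f := fun p : (ι → β) × ι ↦ p.1 p.2)
    fun i ↦ measurable_pi_apply i).comp (hf.prodMk hg)

lemma measurable_supersample_gap {M : ℕ} {𝒲 𝒵 : Type*} [MeasurableSpace 𝒲] [MeasurableSpace 𝒵]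
    {ℓ : 𝒲 → 𝒵 → ℝ} (hℓ : Measurable (Function.uncurry ℓ)) :
    Measurable fun x : 𝒲 × (Fin M → Bool) × (Bool → Fin M → Bool → 𝒵) × Bool ↦
      (M : ℝ)⁻¹ * ∑ j, ℓ x.1 (x.2.2.1 x.2.2.2 j (!(x.2.1 j)))
        - (M : ℝ)⁻¹ * ∑ j, ℓ x.1 (x.2.2.1 x.2.2.2 j (x.2.1 j)) := by
  have hloss : ∀ j (c : Bool → Bool), Measurable
      fun x : 𝒲 × (Fin M → Bool) × (Bool → Fin M → Bool → 𝒵) × Bool ↦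
        ℓ x.1 (x.2.2.1 x.2.2.2 j (c (x.2.1 j))) := fun j c ↦
    hℓ.comp (measurable_fst.prodMk (.apply_of_countable
      ((measurable_pi_apply j).comp (.apply_of_countable (by fun_prop) (by fun_prop)))
      (by fun_prop)))
  exact ((measurable_sum _ fun j _ ↦ hloss j (!·)).const_mul _).sub
    ((measurable_sum _ fun j _ ↦ hloss j id).const_mul _)

lemma sum_bool_exp_mul_sub_le {a b : ℝ} (t : ℝ) {g : Bool → ℝ} (hg : ∀ v, a ≤ g v ∧ g v ≤ b) :
    ∑ v : Bool, exp (t * (g (!v) - g v)) ≤ 2 * exp (t ^ 2 * (b - a) ^ 2 / 2) := by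
  have hdiff : (g true - g false) ^ 2 ≤ (b - a) ^ 2 := by
    obtain ⟨hat, htb⟩ := hg true
    obtain ⟨haf, hfb⟩ := hg false
    exact sq_le_sq' (by linarith) (by linarith)
  calc ∑ v : Bool, exp (t * (g (!v) - g v)) = 2 * cosh (t * (g true - g false)) := by
        rw [Fintype.sum_bool, cosh_eq, Bool.not_true, Bool.not_false]; ring_nf
    _ ≤ 2 * exp ((t * (g true - g false)) ^ 2 / 2) := by gcongr; exact cosh_le_exp_half_sq _
    _ ≤ 2 * exp (t ^ 2 * (b - a) ^ 2 / 2) := by rw [mul_pow]; gcongr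

lemma sum_exp_mul_swap_gap_le {M : ℕ} {a b : ℝ} (l : ℝ) {g : Fin M → Bool → ℝ}
    (hg : ∀ j v, a ≤ g j v ∧ g j v ≤ b) :
    ∑ s : Fin M → Bool, exp (l * ((M : ℝ)⁻¹ * ∑ j, g j (!(s j)) - (M : ℝ)⁻¹ * ∑ j, g j (s j)))
      ≤ 2 ^ M * exp (l ^ 2 * ((b - a) ^ 2 / M) / 2) := by
  have hfactor : ∀ s : Fin M → Bool,
      exp (l * ((M : ℝ)⁻¹ * ∑ j, g j (!(s j)) - (M : ℝ)⁻¹ * ∑ j, g j (s j)))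
        = ∏ j, exp (l / M * (g j (!(s j)) - g j (s j))) := by
    intro s
    rw [← exp_sum, ← mul_sum, sum_sub_distrib]
    ring_nf
  calc _ = ∏ j, ∑ v : Bool, exp (l / M * (g j (!v) - g j v)) := by
        simp only [hfactor]
        exact (Fintype.prod_sum fun j v ↦ exp (l / M * (g j (!v) - g j v))).symm
    _ ≤ ∏ _j : Fin M, 2 * exp ((l / M) ^ 2 * (b - a) ^ 2 / 2) :=
        prod_le_prod (fun j _ ↦ sum_nonneg fun v _ ↦ (exp_pos _).le)
          fun j _ ↦ sum_bool_exp_mul_sub_le (l / M) (hg j)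
    _ = 2 ^ M * exp (l ^ 2 * ((b - a) ^ 2 / M) / 2) := by
        rw [prod_const, card_univ, Fintype.card_fin, mul_pow, ← exp_nat_mul]
        rcases M.eq_zero_or_pos with rfl | hM
        · simp
        · congr 2; field_simp

lemma lintegral_uniform_exp_mul_swap_gap_le {M : ℕ} {a b : ℝ} (l : ℝ) {g : Fin M → Bool → ℝ}
    (hg : ∀ j v, a ≤ g j v ∧ g j v ≤ b) :
    ∫⁻ s, ENNReal.ofReal
        (exp (l * ((M : ℝ)⁻¹ * ∑ j, g j (!(s j)) - (M : ℝ)⁻¹ * ∑ j, g j (s j))))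
        ∂(PMF.uniformOfFintype (Fin M → Bool)).toMeasure
      ≤ ENNReal.ofReal (exp (l ^ 2 * ((b - a) ^ 2 / M) / 2)) := by
  have hmass : ∀ s, (PMF.uniformOfFintype (Fin M → Bool)).toMeasure {s} = (2 ^ M)⁻¹ := by
    intro s
    rw [PMF.toMeasure_apply_singleton _ _ (measurableSet_singleton s),
      PMF.uniformOfFintype_apply]
    simp
  rw [lintegral_fintype]
  simp only [hmass, ← sum_mul]
  rw [← ENNReal.ofReal_sum_of_nonneg fun s _ ↦ (exp_pos _).le]
  calc _ ≤ ENNReal.ofReal (2 ^ M * exp (l ^ 2 * ((b - a) ^ 2 / M) / 2)) * (2 ^ M)⁻¹ := by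
        gcongr; exact sum_exp_mul_swap_gap_le l hg
    _ = _ := by
        rw [ENNReal.ofReal_mul (by positivity), ENNReal.ofReal_pow zero_le_two,
          ENNReal.ofReal_ofNat, mul_right_comm,
          ENNReal.mul_inv_cancel (by positivity) (by simp), one_mul]

section DonskerVaradhan

variable {α : Type*} [MeasurableSpace α] {μ ν : Measure α} [IsProbabilityMeasure μ]
  [IsProbabilityMeasure ν] {f : α → ℝ}

/-- Donsker–Varadhan: Gibbs' inequality for `μ` against the tilted measure `ν.tilted f`. -/
lemma integral_le_integral_llr_add_log_integral_exp (hμν : μ ≪ ν)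
    (h_int : Integrable (llr μ ν) μ) (hfμ : Integrable f μ)
    (hfν : Integrable (fun x ↦ exp (f x)) ν) :
    ∫ x, f x ∂μ ≤ ∫ x, llr μ ν x ∂μ + log (∫ x, exp (f x) ∂ν) := by
  have := isProbabilityMeasure_tilted hfν
  have gibbs := integral_llr_add_sub_measure_univ_nonneg
    (hμν.trans (absolutelyContinuous_tilted hfν)) (integrable_llr_tilted_right hμν hfμ h_int hfν)
  rw [integral_llr_tilted_right hμν hfμ hfν h_int] at gibbs
  simp only [probReal_univ] at gibbs
  linarith

lemma integral_le_integral_llr_add_of_lintegral_exp_le (hμν : μ ≪ ν)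
    (h_int : Integrable (llr μ ν) μ) (hfμ : Integrable f μ) (hfν : AEMeasurable f ν) {K : ℝ}
    (hK : ∫⁻ x, ENNReal.ofReal (exp (f x)) ∂ν ≤ ENNReal.ofReal (exp K)) :
    ∫ x, f x ∂μ ≤ ∫ x, llr μ ν x ∂μ + K := by
  have hpos : 0 ≤ᵐ[ν] fun x ↦ exp (f x) := .of_forall fun x ↦ (exp_pos _).le
  have hexp_meas : AEStronglyMeasurable (fun x ↦ exp (f x)) ν := hfν.exp.aestronglyMeasurable
  have hexp_int : Integrable (fun x ↦ exp (f x)) ν :=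
    ⟨hexp_meas, (hasFiniteIntegral_iff_ofReal hpos).2 (hK.trans_lt ENNReal.ofReal_lt_top)⟩
  have hmgf : ∫ x, exp (f x) ∂ν ≤ exp K := by
    rw [integral_eq_lintegral_of_nonneg_ae hpos hexp_meas]
    exact ENNReal.toReal_le_of_le_ofReal (exp_pos _).le hK
  calc ∫ x, f x ∂μ ≤ ∫ x, llr μ ν x ∂μ + log (∫ x, exp (f x) ∂ν) :=
        integral_le_integral_llr_add_log_integral_exp hμν h_int hfμ hexp_int
    _ ≤ ∫ x, llr μ ν x ∂μ + K := by
        gcongr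
        exact (log_le_log (integral_exp_pos hexp_int) hmgf).trans_eq (log_exp K)

end DonskerVaradhan

lemma llr_ae_eq_of_rnDeriv_ae_eq_exp {α : Type*} [MeasurableSpace α] {μ ν : Measure α}
    {i : α → ℝ} (hμν : μ ≪ ν) (hd : μ.rnDeriv ν =ᵐ[ν] fun x ↦ ENNReal.ofReal (exp (i x))) :
    llr μ ν =ᵐ[μ] i := by
  filter_upwards [hμν.ae_le hd] with x hx
  rw [llr, hx, ENNReal.toReal_ofReal (exp_pos _).le, log_exp]

lemma le_sqrt_of_forall_mul_le_add_sq {D I v : ℝ} (hv : 0 ≤ v)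
    (h : ∀ l, l * D ≤ I + l ^ 2 * v / 2) : D ≤ √(2 * v * I) := by
  rcases le_or_gt D 0 with hD | hD
  · exact hD.trans (sqrt_nonneg _)
  rcases hv.eq_or_lt with rfl | hv
  · have := h ((I + 1) / D)
    rw [div_mul_cancel₀ _ hD.ne'] at this
    linarith
  · refine le_sqrt_of_sq_le ?_
    have := h (D / v)
    field_simp at this
    nlinarith

theorem stmt_9_general {Ω 𝒲 𝒵 : Type*} [MeasurableSpace Ω] [MeasurableSpace 𝒲] [MeasurableSpace 𝒵]
    (P : Measure Ω) [IsProbabilityMeasure P]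
    (M : ℕ) (a b : ℝ)
    (ℓ : 𝒲 → 𝒵 → ℝ) (hℓmeas : Measurable (Function.uncurry ℓ))
    (hℓbdd : ∀ w z, a ≤ ℓ w z ∧ ℓ w z ≤ b)
    (W : Ω → 𝒲) (Zt : Ω → Bool → Fin M → Bool → 𝒵)
    (S : Ω → Fin M → Bool) (R : Ω → Bool)
    (hW : Measurable W) (hZt : Measurable Zt) (hS : Measurable S) (hR : Measurable R)
    (muJ nuP : Measure (𝒲 × (Fin M → Bool) × (Bool → Fin M → Bool → 𝒵) × Bool))
    (hmuJ : muJ = P.map (fun ω => (W ω, S ω, Zt ω, R ω)))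
    (hnuP : nuP = (P.prod ((PMF.uniformOfFintype (Fin M → Bool)).toMeasure)).map
      (fun p => (W p.1, p.2, Zt p.1, R p.1)))
    (hac : muJ ≪ nuP)
    (idens : 𝒲 × (Fin M → Bool) × (Bool → Fin M → Bool → 𝒵) × Bool → ℝ)
    (hidensint : Integrable idens muJ)
    (hd : muJ.rnDeriv nuP =ᵐ[nuP] fun x => ENNReal.ofReal (Real.exp (idens x)))
    (ΔL : 𝒲 × (Fin M → Bool) × (Bool → Fin M → Bool → 𝒵) × Bool → ℝ)
    (hΔLint : Integrable ΔL muJ)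
    (hΔL : ∀ w s zt r, ΔL (w, s, zt, r) =
      (M : ℝ)⁻¹ * ∑ j, ℓ w (zt r j (!(s j))) - (M : ℝ)⁻¹ * ∑ j, ℓ w (zt r j (s j))) :
    ∫ x, ΔL x ∂muJ ≤
      Real.sqrt (2 * (b - a) ^ 2 * (∫ x, idens x ∂muJ) / M) := by
  have hΔLmeas : Measurable ΔL := by
    convert measurable_supersample_gap (M := M) hℓmeas using 1
    exact funext fun ⟨w, s, zt, r⟩ ↦ hΔL w s zt r
  have hcoupling : Measurable fun p : Ω × (Fin M → Bool) ↦ (W p.1, p.2, Zt p.1, R p.1) := by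
    fun_prop
  have : IsProbabilityMeasure muJ := hmuJ ▸ Measure.isProbabilityMeasure_map (by fun_prop)
  have : IsProbabilityMeasure nuP := hnuP ▸ Measure.isProbabilityMeasure_map hcoupling.aemeasurable
  have hmgf (l : ℝ) : ∫⁻ x, ENNReal.ofReal (exp (l * ΔL x)) ∂nuP
      ≤ ENNReal.ofReal (exp (l ^ 2 * ((b - a) ^ 2 / M) / 2)) := by
    have hF : Measurable fun x ↦ ENNReal.ofReal (exp (l * ΔL x)) := by fun_prop
    rw [hnuP, lintegral_map hF hcoupling, lintegral_prod (fun p : Ω × (Fin M → Bool) ↦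
      ENNReal.ofReal (exp (l * ΔL (W p.1, p.2, Zt p.1, R p.1)))) (hF.comp hcoupling).aemeasurable]
    refine (lintegral_mono fun ω ↦ ?_).trans_eq (by rw [lintegral_const, measure_univ, mul_one])
    simpa only [hΔL] using
      lintegral_uniform_exp_mul_swap_gap_le l fun j v ↦ hℓbdd (W ω) (Zt ω (R ω) j v)
  have hllr := llr_ae_eq_of_rnDeriv_ae_eq_exp hac hd
  rw [show 2 * (b - a) ^ 2 * (∫ x, idens x ∂muJ) / M = 2 * ((b - a) ^ 2 / M) * ∫ x, idens x ∂muJ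
    by ring]
  refine le_sqrt_of_forall_mul_le_add_sq (by positivity) fun l ↦ ?_
  have := integral_le_integral_llr_add_of_lintegral_exp_le hac
    ((integrable_congr hllr).2 hidensint) (hΔLint.const_mul l)
    (hΔLmeas.const_mul l).aemeasurable (hmgf l)
  rwa [integral_const_mul, integral_congr_ae hllr] at this

/-- Consequence of Proposition 1 via Jensen and λ-optimization: the expected supersample gap is
bounded as `E[ΔL̂(W,Z̃,R,S)] ≤ sqrt(2(b−a)²·I(W;S|Z̃,R)/M)`, where the conditional mutual
information `I(W;S|Z̃,R)` is the expectation under the joint law of the conditional information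
density `idens`. -/
theorem stmt_9 {Ω 𝒲 𝒵 : Type*} [MeasurableSpace Ω] [MeasurableSpace 𝒲] [MeasurableSpace 𝒵]
    (P : Measure Ω) [IsProbabilityMeasure P]
    (M : ℕ) (hM : 0 < M) (a b : ℝ) (hab : a ≤ b)
    (ℓ : 𝒲 → 𝒵 → ℝ) (hℓmeas : Measurable (Function.uncurry ℓ))
    (hℓbdd : ∀ w z, a ≤ ℓ w z ∧ ℓ w z ≤ b)
    (W : Ω → 𝒲) (Zt : Ω → Bool → Fin M → Bool → 𝒵)
    (S : Ω → Fin M → Bool) (R : Ω → Bool)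
    (hW : Measurable W) (hZt : Measurable Zt) (hS : Measurable S) (hR : Measurable R)
    (muJ nuP : Measure (𝒲 × (Fin M → Bool) × (Bool → Fin M → Bool → 𝒵) × Bool))
    (hmuJ : muJ = P.map (fun ω => (W ω, S ω, Zt ω, R ω)))
    (hnuP : nuP = (P.prod ((PMF.uniformOfFintype (Fin M → Bool)).toMeasure)).map
      (fun p => (W p.1, p.2, Zt p.1, R p.1)))
    (hac : muJ ≪ nuP)
    (idens : 𝒲 × (Fin M → Bool) × (Bool → Fin M → Bool → 𝒵) × Bool → ℝ)
    (hidens : Measurable idens) (hidensint : Integrable idens muJ)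
    (hd : muJ.rnDeriv nuP =ᵐ[nuP] fun x => ENNReal.ofReal (Real.exp (idens x)))
    (ΔL : 𝒲 × (Fin M → Bool) × (Bool → Fin M → Bool → 𝒵) × Bool → ℝ)
    (hΔLint : Integrable ΔL muJ)
    (hΔL : ∀ w s zt r, ΔL (w, s, zt, r) =
      (M : ℝ)⁻¹ * ∑ j, ℓ w (zt r j (!(s j))) - (M : ℝ)⁻¹ * ∑ j, ℓ w (zt r j (s j))) :
    ∫ x, ΔL x ∂muJ ≤
      Real.sqrt (2 * (b - a) ^ 2 * (∫ x, idens x ∂muJ) / M) :=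
  stmt_9_general P M a b ℓ hℓmeas hℓbdd W Zt S R hW hZt hS hR muJ nuP hmuJ hnuP hac idens hidensint
    hd ΔL hΔLint hΔL
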